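/- arXiv:1506.00233 — 2 statements merged into one kernel-verified Lean document; each statement's English description precedes it below -/
import Mathlib

section
/- Assume Hypothesis (*). If K is the d(I)-subgroup of S for some nonempty index set I, then the centralizer C_S(K) is the product of the factors S_i with i ∉ I, and the normalizer N_S(K) equals K × C_S(K). -/
namespace EngelPaper

variable {G : Type*}

/-- The commutator `[a,b] = a⁻¹b⁻¹ab` (left-normed convention of the paper). -/
def pc [Group G] (a b : G) : G := a⁻¹ * b⁻¹ * a * b

/-- The left-normed Engel commutator `[x, g, g, ..., g]` with `g` repeated `n` times. -/
def engel [Group G] (g x : G) : ℕ → G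
  | 0 => x
  | n + 1 => pc (engel g x n) g

/-- The subgroup `E_n(g)` generated by all `[x, g, ..., g]` (`g` repeated `n` times), `x ∈ G`. -/
def Esub [Group G] (g : G) (n : ℕ) : Subgroup G :=
  Subgroup.closure { y | ∃ x : G, y = engel g x n }

/-- The left-normed Engel commutator `[x, α, ..., α]` (`α` repeated `n` times) for an
automorphism `α`, computed in the semidirect product `G⟨α⟩`; it lies in `G` and equals the
value of this function. -/
def engelAut [Group G] (α : MulAut G) (x : G) : ℕ → G
  | 0 => x
  | n + 1 => (engelAut α x n)⁻¹ * α (engelAut α x n)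

/-- The subgroup `E_{G,n}(α)` generated by all `[x, α, ..., α]`, `x ∈ G`. -/
def EsubAut [Group G] (α : MulAut G) (n : ℕ) : Subgroup G :=
  Subgroup.closure { y | ∃ x : G, y = engelAut α x n }

theorem normal_sSup_of_conj_invariant [Group G] {s : Set (Subgroup G)}
    (h : ∀ N ∈ s, ∀ g : G, Subgroup.map (MulAut.conj g).toMonoidHom N ∈ s) :
    (sSup s).Normal := by
  constructor
  intro x hx g
  have hle : sSup s ≤ (sSup s).comap ((MulAut.conj g).toMonoidHom) := by
    refine sSup_le ?_
    intro N hN y hy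
    simp only [Subgroup.mem_comap]
    exact le_sSup (h N hN g) ⟨y, hy, rfl⟩
  have := hle hx
  simpa [MulAut.conj_apply] using this

theorem normal_sSup [Group G] {s : Set (Subgroup G)}
    (h : ∀ N ∈ s, N.Normal) : (sSup s).Normal := by
  constructor
  intro x hx g
  have hle : sSup s ≤ (sSup s).comap ((MulAut.conj g).toMonoidHom) := by
    refine sSup_le ?_
    intro N hN y hy
    simp only [Subgroup.mem_comap, MulAut.conj_apply, MulEquiv.coe_toMonoidHom]
    exact le_sSup hN ((h N hN).conj_mem y hy g)
  have := hle hx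
  simpa [MulAut.conj_apply] using this

/-- The Fitting subgroup: the subgroup generated by all nilpotent normal subgroups. -/
def fitting (G : Type*) [Group G] : Subgroup G :=
  sSup { N : Subgroup G | N.Normal ∧ Group.IsNilpotent N }

theorem fitting_normal (G : Type*) [Group G] : (fitting G).Normal :=
  normal_sSup fun _ hN => hN.1

/-- One step of the Fitting series: the inverse image of the Fitting subgroup of the quotient. -/
def fitStep (G : Type*) [Group G] (N : { N : Subgroup G // N.Normal }) :
    { N : Subgroup G // N.Normal } :=
  letI := N.2
  ⟨Subgroup.comap (QuotientGroup.mk' N.1) (fitting (G ⧸ N.1)),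
    (fitting_normal (G ⧸ N.1)).comap _⟩

/-- The Fitting series `F_0(G) = 1`, `F_{k+1}(G)/F_k(G) = F(G/F_k(G))`. -/
def fitSeries (G : Type*) [Group G] (n : ℕ) : Subgroup G :=
  ((fitStep G)^[n] ⟨⊥, inferInstance⟩).1

/-- The Fitting height: the least `h` with `F_h(G) = G`. -/
noncomputable def fittingHeight (G : Type*) [Group G] : ℕ :=
  sInf { h | fitSeries G h = ⊤ }




/-- A subgroup is subnormal if it can be joined to the whole group
by a chain of successively normal subgroups. -/
def IsSubnormal [Group G] (H : Subgroup G) : Prop :=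
  ∃ (n : ℕ) (c : ℕ → Subgroup G), c 0 = H ∧ c n = ⊤ ∧
    ∀ i, c i ≤ c (i + 1) ∧ ∀ x ∈ c (i + 1), ∀ y ∈ c i, x * y * x⁻¹ ∈ c i

/-- A group is quasisimple if it is perfect and its central quotient
is a nonabelian simple group. -/
def IsQuasisimple (G : Type*) [Group G] : Prop :=
  commutator G = ⊤ ∧
    IsSimpleGroup (G ⧸ Subgroup.center G) ∧
    ∃ a b : G ⧸ Subgroup.center G, a * b ≠ b * a

theorem map_center_eq {H : Type*} [Group G] [Group H] (e : G ≃* H) :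
    (Subgroup.center G).map e.toMonoidHom = Subgroup.center H := by
  ext x
  simp only [Subgroup.mem_map, Subgroup.mem_center_iff, MulEquiv.coe_toMonoidHom]
  constructor
  · rintro ⟨y, hy, rfl⟩ h
    obtain ⟨z, rfl⟩ := e.surjective h
    rw [← map_mul, ← map_mul, hy z]
  · intro hx
    refine ⟨e.symm x, fun z => ?_, e.apply_symm_apply x⟩
    apply e.injective
    rw [map_mul, map_mul, e.apply_symm_apply]
    have := hx (e z)
    rw [this]

theorem isQuasisimple_congr {H : Type*} [Group G] [Group H] (e : G ≃* H)
    (h : IsQuasisimple G) : IsQuasisimple H := by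
  obtain ⟨hcomm, hsimp, a, b, hab⟩ := h
  have hcenter : (Subgroup.center G).map e.toMonoidHom = Subgroup.center H := map_center_eq e
  have equot : (G ⧸ Subgroup.center G) ≃* (H ⧸ Subgroup.center H) :=
    QuotientGroup.congr (Subgroup.center G) (Subgroup.center H) e hcenter
  refine ⟨?_, ?_, equot a, equot b, ?_⟩
  · have h1 : Subgroup.map e.toMonoidHom (commutator G) = commutator H := by
      rw [commutator_def, commutator_def, Subgroup.map_commutator,
        Subgroup.map_top_of_surjective _ e.surjective]
    rw [← h1, hcomm, Subgroup.map_top_of_surjective _ e.surjective]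
  · haveI := hsimp
    haveI : Nontrivial (H ⧸ Subgroup.center H) := by
      rcases hsimp.exists_pair_ne with ⟨u, v, huv⟩
      exact ⟨equot u, equot v, fun hh => huv (equot.injective hh)⟩
    exact IsSimpleGroup.isSimpleGroup_of_surjective equot.toMonoidHom equot.surjective
  · intro hcon
    apply hab
    apply equot.injective
    rw [map_mul, map_mul, hcon]

theorem isSubnormal_map_conj [Group G] {N : Subgroup G} (hN : IsSubnormal N) (w : G) :
    IsSubnormal (N.map (MulAut.conj w).toMonoidHom) := by
  obtain ⟨n, c, h0, hn, hc⟩ := hN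
  refine ⟨n, fun i => (c i).map (MulAut.conj w).toMonoidHom, by simp only [h0], ?_, ?_⟩
  · simp only [hn]
    exact Subgroup.map_top_of_surjective _ (MulAut.conj w).surjective
  · intro i
    refine ⟨Subgroup.map_mono (hc i).1, ?_⟩
    rintro x ⟨x', hx', rfl⟩ y ⟨y', hy', rfl⟩
    refine ⟨x' * y' * x'⁻¹, (hc i).2 x' hx' y' hy', ?_⟩
    simp [map_mul, map_inv]

/-- The generalized Fitting subgroup: the product of the Fitting subgroup and all
subnormal quasisimple subgroups. -/
def genFitting (G : Type*) [Group G] : Subgroup G :=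
  fitting G ⊔ sSup { N : Subgroup G | IsSubnormal N ∧ IsQuasisimple N }

theorem genFitting_normal (G : Type*) [Group G] : (genFitting G).Normal := by
  have h2 : (sSup { N : Subgroup G | IsSubnormal N ∧ IsQuasisimple N }).Normal := by
    apply normal_sSup_of_conj_invariant
    rintro N ⟨hsub, hqs⟩ g
    refine ⟨isSubnormal_map_conj hsub g, ?_⟩
    exact isQuasisimple_congr
      (Subgroup.equivMapOfInjective N _ (MulAut.conj g).injective) hqs
  haveI := fitting_normal G
  haveI := h2
  exact Subgroup.sup_normal _ _


/-- One step of the generalized Fitting series. -/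
def genFitStep (G : Type*) [Group G] (N : { N : Subgroup G // N.Normal }) :
    { N : Subgroup G // N.Normal } :=
  letI := N.2
  ⟨Subgroup.comap (QuotientGroup.mk' N.1) (genFitting (G ⧸ N.1)),
    (genFitting_normal (G ⧸ N.1)).comap _⟩

/-- The generalized Fitting series `F*_0(G) = 1`, `F*_{i+1}(G)/F*_i(G) = F*(G/F*_i(G))`. -/
def genFitSeries (G : Type*) [Group G] (n : ℕ) : Subgroup G :=
  ((genFitStep G)^[n] ⟨⊥, inferInstance⟩).1

/-- The generalized Fitting height: the least `h` with `F*_h(G) = G`. -/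
noncomputable def genFittingHeight (G : Type*) [Group G] : ℕ :=
  sInf { h | genFitSeries G h = ⊤ }

/-- The soluble radical: the subgroup generated by all soluble normal subgroups. -/
def solRadical (G : Type*) [Group G] : Subgroup G :=
  sSup { N : Subgroup G | N.Normal ∧ IsSolvable N }

theorem solRadical_normal (G : Type*) [Group G] : (solRadical G).Normal :=
  normal_sSup fun _ hN => hN.1

/-- A group is a nonabelian simple group. -/
def IsNonabelianSimple (G : Type*) [Group G] : Prop :=
  IsSimpleGroup G ∧ ∃ a b : G, a * b ≠ b * a

/-- A group is the (internal) direct product of finitely many nonabelian simple subgroups. -/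
def IsProdOfSimples (Q : Type*) [Group Q] : Prop :=
  ∃ (k : ℕ) (H : Fin k → Subgroup Q),
    (∀ i, (H i).Normal) ∧ (∀ i, IsNonabelianSimple (H i)) ∧
    iSup H = ⊤ ∧ iSupIndep H

/-- For `A ≤ B`, the factor `B/A` is soluble (stated for every proof that the
corresponding subgroup is normal). -/
def SolubleFactor [Group G] (A B : Subgroup G) : Prop :=
  ∀ h : (A.subgroupOf B).Normal, letI := h; IsSolvable (B ⧸ A.subgroupOf B)

/-- For `A ≤ B`, the factor `B/A` is a direct product of nonabelian simple groups. -/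
def SimpleProdFactor [Group G] (A B : Subgroup G) : Prop :=
  ∀ h : (A.subgroupOf B).Normal, letI := h; IsProdOfSimples (B ⧸ A.subgroupOf B)

/-- For `A ≤ B`, the factor `B/A` is nonabelian simple. -/
def NonabelianSimpleFactor [Group G] (A B : Subgroup G) : Prop :=
  ∀ h : (A.subgroupOf B).Normal, letI := h; IsNonabelianSimple (B ⧸ A.subgroupOf B)

/-- For `A ≤ B, B'`, the factors `B/A` and `B'/A` are isomorphic. -/
def IsoFactor [Group G] (A B B' : Subgroup G) : Prop :=
  ∀ (h : (A.subgroupOf B).Normal) (h' : (A.subgroupOf B').Normal),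
    letI := h; letI := h'
    Nonempty ((B ⧸ A.subgroupOf B) ≃* (B' ⧸ A.subgroupOf B'))

open scoped Classical in
/-- The nonsoluble length `λ(G)`: the minimum number of nonsoluble factors in a normal
series each of whose factors either is soluble or is a direct product of nonabelian
simple groups. -/
noncomputable def nonsolLength (G : Type*) [Group G] : ℕ :=
  sInf { k | ∃ (n : ℕ) (c : ℕ → Subgroup G), c 0 = ⊥ ∧ c n = ⊤ ∧
    (∀ i, c i ≤ c (i + 1)) ∧ (∀ i, (c i).Normal) ∧
    (∀ i < n, SolubleFactor (c i) (c (i + 1)) ∨ SimpleProdFactor (c i) (c (i + 1))) ∧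
    k = ((Finset.range n).filter fun i => ¬ SolubleFactor (c i) (c (i + 1))).card }

/-- `R_i(G)`: the maximal normal subgroup of `G` of nonsoluble length at most `i`. -/
noncomputable def Rsub (G : Type*) [Group G] (i : ℕ) : Subgroup G :=
  sSup { N : Subgroup G | N.Normal ∧ nonsolLength N ≤ i }

/-- One step of the upper nonsoluble series: from `R_{i-1}` to `L_i`
(the inverse image of the generalized Fitting subgroup of the quotient). -/
def unsStepL (G : Type*) [Group G] (R : { N : Subgroup G // N.Normal }) :
    { N : Subgroup G // N.Normal } :=
  letI := R.2
  ⟨Subgroup.comap (QuotientGroup.mk' R.1) (genFitting (G ⧸ R.1)),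
    (genFitting_normal (G ⧸ R.1)).comap _⟩

/-- One step of the upper nonsoluble series: from `L_i` to `R_i`
(the inverse image of the soluble radical of the quotient). -/
def unsStepR (G : Type*) [Group G] (L : { N : Subgroup G // N.Normal }) :
    { N : Subgroup G // N.Normal } :=
  letI := L.2
  ⟨Subgroup.comap (QuotientGroup.mk' L.1) (solRadical (G ⧸ L.1)),
    (solRadical_normal (G ⧸ L.1)).comap _⟩

/-- The terms `R_i` of the upper nonsoluble series, bundled with normality. -/
def unsRAux (G : Type*) [Group G] (n : ℕ) : { N : Subgroup G // N.Normal } :=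
  (fun P => unsStepR G (unsStepL G P))^[n] ⟨solRadical G, solRadical_normal G⟩

/-- The terms `R_i` of the upper nonsoluble series of `G`:
`R_0` is the soluble radical and `R_i/L_i` is the soluble radical of `G/L_i`. -/
def unsRsub (G : Type*) [Group G] (n : ℕ) : Subgroup G := (unsRAux G n).1

/-- The terms `L_i` of the upper nonsoluble series of `G`: `L_0 = 1` and
`L_i/R_{i-1} = F*(G/R_{i-1})` for `i ≥ 1`. -/
def unsLsub (G : Type*) [Group G] : ℕ → Subgroup G
  | 0 => ⊥
  | n + 1 => (unsStepL G (unsRAux G n)).1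

/-- `T` is (the full inverse image in `G` of) one of the simple factors of the
section `U_i = L_i/R_{i-1}` of the upper nonsoluble series (`i ≥ 1`): it satisfies
`R_{i-1} ≤ T ≤ L_i`, it is normalized by `L_i`, and `T/R_{i-1}` is nonabelian simple. -/
def IsSimpleFactor (G : Type*) [Group G] (i : ℕ) (T : Subgroup G) : Prop :=
  unsRsub G (i - 1) ≤ T ∧ T ≤ unsLsub G i ∧
  (∀ x ∈ unsLsub G i, ∀ t ∈ T, x * t * x⁻¹ ∈ T) ∧
  NonabelianSimpleFactor (unsRsub G (i - 1)) T

/-- The kernel `K_i` of the permutation action of `G` by conjugation on the set of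
simple factors of the section `U_i` of the upper nonsoluble series. -/
def unsKernel (G : Type*) [Group G] (i : ℕ) : Subgroup G where
  carrier := { w | ∀ T : Subgroup G, IsSimpleFactor G i T → ∀ x : G, x ∈ T ↔ w * x * w⁻¹ ∈ T }
  one_mem' := by intro T _ x; simp
  mul_mem' := by
    intro a b ha hb T hT x
    have h1 := hb T hT x
    have h2 := ha T hT (b * x * b⁻¹)
    have h3 : a * (b * x * b⁻¹) * a⁻¹ = (a * b) * x * (a * b)⁻¹ := by group
    rw [h3] at h2
    exact h1.trans h2
  inv_mem' := by
    intro a ha T hT x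
    have h1 := ha T hT (a⁻¹ * x * a)
    have h2 : a * (a⁻¹ * x * a) * a⁻¹ = x := by group
    rw [h2] at h1
    have h3 : a⁻¹ * x * a⁻¹⁻¹ = a⁻¹ * x * a := by rw [inv_inv]
    rw [h3]
    exact h1.symm

/-- The lexicographic order on positive integers from the paper: `a ≺ b` if for some
prime `p` the multiplicities of all primes `q < p` agree in `a` and `b` and the
multiplicity of `p` in `a` is smaller than in `b`. -/
def lexPrimeLt (a b : ℕ) : Prop :=
  ∃ p : ℕ, p.Prime ∧ (∀ q < p, q.Prime → a.factorization q = b.factorization q) ∧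
    a.factorization p < b.factorization p


/-- The subgroup of a direct product consisting of the elements supported on `J`. -/
def suppSubgroup {ι : Type*} {Δ : ι → Type*} [∀ i, Group (Δ i)] (J : Set ι) :
    Subgroup (∀ i, Δ i) where
  carrier := { x | ∀ i, i ∉ J → x i = 1 }
  one_mem' := fun _ _ => rfl
  mul_mem' := by
    intro a b ha hb i hi
    have := ha i hi; have := hb i hi
    simp_all [Pi.mul_apply]
  inv_mem' := by
    intro a ha i hi
    have := ha i hi
    simp_all [Pi.inv_apply]

/-- The `i`-th factor `S_i` of the direct product `S = S_1 × ⋯ × S_r`. -/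
def factorSub {ι : Type*} {Δ : ι → Type*} [∀ i, Group (Δ i)] (i : ι) :
    Subgroup (∀ j, Δ j) :=
  suppSubgroup {i}

/-- The homomorphism of a direct product killing all coordinates outside `I`. -/
def restrictSupp {ι : Type*} {Δ : ι → Type*} [∀ i, Group (Δ i)] (I : Set ι)
    [DecidablePred (· ∈ I)] : (∀ j, Δ j) →* (∀ j, Δ j) where
  toFun x j := if j ∈ I then x j else 1
  map_one' := by funext j; by_cases h : j ∈ I <;> simp [h]
  map_mul' := by
    intro a b; funext j; by_cases h : j ∈ I <;> simp [h]

/-- The fixed-point subgroup (in `S`) of an automorphism `φ`;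
for `φ` as in Hypothesis (*), this is the diagonal `D = C_S(φ)`. -/
def fixedSub {S : Type*} [Group S] (φ : MulAut S) : Subgroup S where
  carrier := { x | φ x = x }
  one_mem' := map_one φ
  mul_mem' := by
    intro a b ha hb
    simp only [Set.mem_setOf_eq, map_mul] at *
    rw [ha, hb]
  inv_mem' := by
    intro a ha
    simp only [Set.mem_setOf_eq, map_inv] at *
    rw [ha]

/-- The `d(I)`-subgroup determined by `φ` and a set of indices `I`: the diagonal
(with respect to `φ`) in the product of the factors `S_i`, `i ∈ I`; equivalently, the
image of the full diagonal `D = C_S(φ)` under the projection onto the coordinates in `I`. -/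
def dSubgroup {r : ℕ} {Δ : Type*} [Group Δ] (φ : MulAut (Fin r → Δ)) (I : Finset (Fin r)) :
    Subgroup (Fin r → Δ) :=
  Subgroup.map (restrictSupp (↑I : Set (Fin r))) (fixedSub φ)

/-- `K` is a `d`-subgroup (with respect to `φ`): a `d(I)`-subgroup for some nonempty `I`. -/
def IsDSubgroup {r : ℕ} {Δ : Type*} [Group Δ] (φ : MulAut (Fin r → Δ))
    (K : Subgroup (Fin r → Δ)) : Prop :=
  ∃ I : Finset (Fin r), I.Nonempty ∧ K = dSubgroup φ I

end EngelPaper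

section Statements

universe u

open EngelPaper

/-!
The diagonal `D = C_S(φ)` projects isomorphically onto every factor. A fixed point of `φ` is
determined by any one coordinate: if it is trivial at `j` it commutes with `S_j`, so, being fixed,
it commutes with `φ(S_j) = S_{j+1}`, and it is trivial at `j + 1` since the factors have trivial
centre. Every value occurs, because the coordinates of `φ^(j-i)` applied to `a ∈ S_i` close up
into a fixed point as `φ^r = 1`.

Let `K` be the projection of `D` to the coordinates in `I`. Since each projection of `D` is onto, an
element centralizing `K` has central, hence trivial, coordinates in `I`. If `u` is supported on
`I` and normalizes `K`, conjugation by `u` agrees on `K` with conjugation by the `e ∈ D` with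
`e_{i₀} = u_{i₀}` (`i₀ ∈ I`), because both produce elements of `D` agreeing at `i₀`. Hence `e⁻¹u` is
central in each coordinate in `I`, and `u ∈ K`; a general normalizing element is `u` times an
element supported off `I`, which centralizes `K`.
-/

namespace EngelPaper

section Diagonal

variable {ι : Type*} {Δ : ι → Type*} [∀ i, Group (Δ i)]

theorem restrictSupp_apply_of_mem {I : Set ι} [DecidablePred (· ∈ I)] {x : ∀ i, Δ i} {j : ι}
    (hj : j ∈ I) : restrictSupp I x j = x j :=
  if_pos hj

theorem restrictSupp_apply_of_notMem {I : Set ι} [DecidablePred (· ∈ I)] {x : ∀ i, Δ i}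
    {j : ι} (hj : j ∉ I) : restrictSupp I x j = 1 :=
  if_neg hj

def IsDiagonal (D : Subgroup (∀ i, Δ i)) : Prop :=
  ∀ i, Function.Bijective fun d : D => (d : ∀ j, Δ j) i

variable (D : Subgroup (∀ i, Δ i)) (I : Set ι) [DecidablePred (· ∈ I)]

theorem disjoint_map_restrictSupp_suppSubgroup_compl :
    Disjoint (D.map (restrictSupp I)) (suppSubgroup Iᶜ) := by
  rw [Subgroup.disjoint_def]
  rintro _ ⟨d, -, rfl⟩ hc
  funext j
  by_cases hj : j ∈ I
  · exact hc j (Set.notMem_compl_iff.mpr hj)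
  · exact restrictSupp_apply_of_notMem hj

variable {D}

theorem centralizer_map_restrictSupp (hZ : ∀ i, Subgroup.center (Δ i) = ⊥) (hD : IsDiagonal D) :
    Subgroup.centralizer (D.map (restrictSupp I) : Set (∀ i, Δ i)) = suppSubgroup Iᶜ := by
  ext c
  simp only [Subgroup.mem_centralizer_iff, Subgroup.coe_map, Set.forall_mem_image]
  constructor
  · intro hc j hj
    rw [Set.notMem_compl_iff] at hj
    rw [← Subgroup.mem_bot, ← hZ j, Subgroup.mem_center_iff]
    intro b
    obtain ⟨⟨d, hd⟩, rfl⟩ := (hD j).2 b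
    simpa [restrictSupp_apply_of_mem hj] using congrFun (hc hd) j
  · intro hc d _
    funext j
    by_cases hj : j ∈ I
    · simp [hc j (Set.notMem_compl_iff.mpr hj)]
    · simp [restrictSupp_apply_of_notMem hj]

theorem exists_eqOn_of_mem_normalizer_map_restrictSupp (hZ : ∀ i, Subgroup.center (Δ i) = ⊥)
    (hD : IsDiagonal D) {u : ∀ i, Δ i}
    (hu : u ∈ Subgroup.normalizer (D.map (restrictSupp I) : Set (∀ i, Δ i)))
    {i₀ : ι} (hi₀ : i₀ ∈ I) : ∃ e ∈ D, ∀ j ∈ I, u j = e j := by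
  obtain ⟨⟨e, he⟩, hei₀ : e i₀ = u i₀⟩ := (hD i₀).2 (u i₀)
  refine ⟨e, he, fun j hj => ?_⟩
  suffices (e j)⁻¹ * u j ∈ Subgroup.center (Δ j) by
    rw [hZ j, Subgroup.mem_bot, inv_mul_eq_one] at this
    exact this.symm
  rw [Subgroup.mem_center_iff]
  intro b
  obtain ⟨⟨d, hd⟩, rfl⟩ := (hD j).2 b
  show d j * ((e j)⁻¹ * u j) = (e j)⁻¹ * u j * d j
  obtain ⟨d', hd', hconj⟩ :=
    (Subgroup.mem_normalizer_iff.mp hu _).mp (Subgroup.mem_map_of_mem _ hd)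
  have hd'_eq : d' = e * d * e⁻¹ := by
    have hi₀' := congrFun hconj i₀
    simp only [Pi.mul_apply, Pi.inv_apply, restrictSupp_apply_of_mem hi₀] at hi₀'
    have := (hD i₀).1 (a₁ := ⟨d', hd'⟩) (a₂ := ⟨e * d * e⁻¹, mul_mem (mul_mem he hd) (inv_mem he)⟩)
      (by simp only [hi₀', Pi.mul_apply, Pi.inv_apply, hei₀])
    exact congrArg Subtype.val this
  have hj' := congrFun hconj j
  simp only [hd'_eq, Pi.mul_apply, Pi.inv_apply, restrictSupp_apply_of_mem hj] at hj'
  calc d j * ((e j)⁻¹ * u j) = (e j)⁻¹ * (e j * d j * (e j)⁻¹) * u j := by group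
    _ = (e j)⁻¹ * u j * d j := by rw [hj']; group

theorem normalizer_map_restrictSupp (hZ : ∀ i, Subgroup.center (Δ i) = ⊥) (hD : IsDiagonal D)
    (hI : I.Nonempty) :
    Subgroup.normalizer (D.map (restrictSupp I) : Set (∀ i, Δ i)) =
      D.map (restrictSupp I) ⊔ Subgroup.centralizer (D.map (restrictSupp I) : Set (∀ i, Δ i)) := by
  refine le_antisymm (fun w hw => ?_)
    (sup_le Subgroup.le_normalizer (Subgroup.centralizer_le_normalizer _))
  set u := restrictSupp I w
  have hv : u⁻¹ * w ∈ Subgroup.centralizer (D.map (restrictSupp I) : Set (∀ i, Δ i)) := by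
    rw [centralizer_map_restrictSupp I hZ hD]
    intro j hj
    simp [u, restrictSupp_apply_of_mem (Set.notMem_compl_iff.mp hj)]
  have hu : u ∈ Subgroup.normalizer (D.map (restrictSupp I) : Set (∀ i, Δ i)) := by
    simpa using mul_mem hw (inv_mem (Subgroup.centralizer_le_normalizer _ hv))
  obtain ⟨e, he, hue⟩ := exists_eqOn_of_mem_normalizer_map_restrictSupp I hZ hD hu hI.some_mem
  have hu_eq : u = restrictSupp I e := by
    funext j
    by_cases hj : j ∈ I
    · rw [hue j hj, restrictSupp_apply_of_mem hj]
    · simp only [u, restrictSupp_apply_of_notMem hj]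
  have := Subgroup.mul_mem_sup (hu_eq ▸ Subgroup.mem_map_of_mem _ he) hv
  rwa [mul_inv_cancel_left] at this

end Diagonal

theorem IsNonabelianSimple.center_eq_bot {G : Type*} [Group G] (hG : IsNonabelianSimple G) :
    Subgroup.center G = ⊥ := by
  obtain ⟨hsimple, a, b, hab⟩ := hG
  refine (hsimple.eq_bot_or_eq_top_of_normal _ inferInstance).resolve_right fun htop => hab ?_
  exact (Subgroup.mem_center_iff.mp (htop ▸ Subgroup.mem_top a) b).symm

section Factors

variable {ι : Type*} {Δ : ι → Type*} [∀ i, Group (Δ i)]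

theorem mem_factorSub_iff {i : ι} {x : ∀ j, Δ j} : x ∈ factorSub i ↔ ∀ j, j ≠ i → x j = 1 :=
  forall_congr' fun _ => by rw [Set.mem_singleton_iff]

variable [DecidableEq ι]

theorem mulSingle_mem_factorSub (i : ι) (a : Δ i) : Pi.mulSingle i a ∈ factorSub i :=
  mem_factorSub_iff.mpr fun _ hj => Pi.mulSingle_eq_of_ne hj a

theorem eq_mulSingle_of_mem_factorSub {i : ι} {x : ∀ j, Δ j} (hx : x ∈ factorSub i) :
    x = Pi.mulSingle i (x i) := by
  funext j
  by_cases hj : j = i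
  · subst hj; simp
  · rw [mem_factorSub_iff.mp hx j hj, Pi.mulSingle_eq_of_ne hj]

variable {f : MulAut (∀ i, Δ i)} {j k : ι}

theorem apply_eq_one_of_map_factorSub_eq (hf : (factorSub j).map f.toMonoidHom = factorSub k)
    (hZ : Subgroup.center (Δ k) = ⊥) {x : ∀ i, Δ i} (hx : x j = 1) : f x k = 1 := by
  rw [← Subgroup.mem_bot, ← hZ, Subgroup.mem_center_iff]
  intro b
  obtain ⟨y, hy, hyb⟩ : Pi.mulSingle k b ∈ (factorSub j).map f.toMonoidHom :=
    hf ▸ mulSingle_mem_factorSub k b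
  have hxy : y * x = x * y := by
    funext i
    by_cases hi : i = j
    · subst hi; simp [hx]
    · simp [mem_factorSub_iff.mp hy i hi]
  have hyb : f y = Pi.mulSingle k b := hyb
  simpa [hyb] using congrFun (congrArg f hxy) k

theorem apply_eq_apply_mulSingle_of_map_factorSub_eq
    (hf : (factorSub j).map f.toMonoidHom = factorSub k) (hZ : Subgroup.center (Δ k) = ⊥)
    (x : ∀ i, Δ i) : f x k = f (Pi.mulSingle j (x j)) k := by
  have hy : (x * (Pi.mulSingle j (x j))⁻¹) j = 1 := by simp
  calc f x k = f (x * (Pi.mulSingle j (x j))⁻¹) k * f (Pi.mulSingle j (x j)) k := by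
        rw [← Pi.mul_apply, ← map_mul, inv_mul_cancel_right]
    _ = f (Pi.mulSingle j (x j)) k := by
        rw [apply_eq_one_of_map_factorSub_eq hf hZ hy, one_mul]

end Factors

section Cyclic

open Fin.NatCast Fin.CommRing

variable {Δ : Type*} [Group Δ] {r : ℕ} [NeZero r] (φ : MulAut (Fin r → Δ))

def PermutesFactorsCyclically : Prop :=
  ∀ i : Fin r, (factorSub (Δ := fun _ => Δ) i).map φ.toMonoidHom = factorSub (i + 1)

def diagonalOf (i : Fin r) (a : Δ) : Fin r → Δ :=
  fun j => (φ ^ (j - i).val) (Pi.mulSingle i a) j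

variable {φ}

theorem pow_apply_mem_factorSub (hperm : PermutesFactorsCyclically φ) (k : ℕ) {i : Fin r} {x : Fin r → Δ} (hx : x ∈ factorSub i) :
    (φ ^ k) x ∈ factorSub (i + k) := by
  induction k with
  | zero => simpa using hx
  | succ k ih =>
    rw [pow_succ', MulAut.mul_apply, Nat.cast_succ, ← add_assoc, ← hperm]
    exact Subgroup.mem_map_of_mem _ ih

theorem pow_natCast_val (hord : orderOf φ = r) (k : ℕ) : φ ^ (k : Fin r).val = φ ^ k := by
  rw [Fin.val_natCast, ← pow_mod_orderOf φ k, hord]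

theorem diagonalOf_mem_fixedSub
    (hperm : PermutesFactorsCyclically φ) (hord : orderOf φ = r) (hZ : Subgroup.center Δ = ⊥) (i : Fin r) (a : Δ) :
    diagonalOf φ i a ∈ fixedSub φ := by
  change φ (diagonalOf φ i a) = diagonalOf φ i a
  funext m
  obtain ⟨j, rfl⟩ : ∃ j, m = j + 1 := ⟨m - 1, (sub_add_cancel m 1).symm⟩
  set n := (j - i).val
  have hn : (φ ^ n) (Pi.mulSingle i a) ∈ factorSub j := by
    simpa [n] using pow_apply_mem_factorSub hperm n (mulSingle_mem_factorSub i a)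
  have hsucc : (((n + 1 : ℕ) : Fin r)) = j + 1 - i := by
    push_cast [n]; ring
  rw [apply_eq_apply_mulSingle_of_map_factorSub_eq (hperm j) hZ]
  change φ (Pi.mulSingle j ((φ ^ n) (Pi.mulSingle i a) j)) (j + 1) =
    (φ ^ (j + 1 - i).val) (Pi.mulSingle i a) (j + 1)
  rw [← eq_mulSingle_of_mem_factorSub hn, ← hsucc, pow_natCast_val hord, pow_succ',
    MulAut.mul_apply]

theorem eq_one_of_mem_fixedSub_of_apply_eq_one (hperm : PermutesFactorsCyclically φ)
    (hZ : Subgroup.center Δ = ⊥) {d : Fin r → Δ} (hd : d ∈ fixedSub φ) {i : Fin r}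
    (hi : d i = 1) : d = 1 := by
  have hk : ∀ k : ℕ, d (i + k) = 1 := by
    intro k
    induction k with
    | zero => simpa using hi
    | succ k ih =>
      rw [Nat.cast_succ, ← add_assoc, ← show φ d = d from hd]
      exact apply_eq_one_of_map_factorSub_eq (hperm _) hZ ih
  funext j
  simpa using hk (j - i).val

theorem isDiagonal_fixedSub (hperm : PermutesFactorsCyclically φ) (hord : orderOf φ = r) (hZ : Subgroup.center Δ = ⊥) : IsDiagonal (fixedSub φ) := by
  intro i
  constructor
  · rintro ⟨d, hd⟩ ⟨d', hd'⟩ (h : d i = d' i)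
    have := eq_one_of_mem_fixedSub_of_apply_eq_one hperm hZ (mul_mem hd (inv_mem hd'))
      (i := i) (by simp [h])
    exact Subtype.ext (mul_inv_eq_one.mp this)
  · intro a
    exact ⟨⟨diagonalOf φ i a, diagonalOf_mem_fixedSub hperm hord hZ i a⟩, by simp [diagonalOf]⟩

end Cyclic

end EngelPaper

theorem stmt7_general {Δ : Type u} [Group Δ] (hΔ : IsNonabelianSimple Δ)
    (r : ℕ) [NeZero r] (φ : MulAut (Fin r → Δ)) (hord : orderOf φ = r)
    (hperm : ∀ i : Fin r,
      Subgroup.map φ.toMonoidHom (factorSub (Δ := fun _ : Fin r => Δ) i) = factorSub (i + 1))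
    (I : Finset (Fin r)) (hI : I.Nonempty)
    (K : Subgroup (Fin r → Δ)) (hK : K = dSubgroup φ I) :
    Subgroup.centralizer (K : Set (Fin r → Δ)) = suppSubgroup ((↑I : Set (Fin r))ᶜ) ∧
    Subgroup.normalizer (K : Set (Fin r → Δ)) = K ⊔ Subgroup.centralizer (K : Set (Fin r → Δ)) ∧
    Disjoint K (Subgroup.centralizer (K : Set (Fin r → Δ))) := by
  subst hK
  have hZ := hΔ.center_eq_bot
  have hD := isDiagonal_fixedSub hperm hord hZ
  have hC := centralizer_map_restrictSupp (↑I : Set (Fin r)) (fun _ => hZ) hD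
  refine ⟨hC, normalizer_map_restrictSupp _ (fun _ => hZ) hD hI, ?_⟩
  rw [dSubgroup, hC]
  exact disjoint_map_restrictSupp_suppSubgroup_compl _ _

/-- **Lemma 3.4.** Under Hypothesis (*), for the `d(I)`-subgroup `K`, the centralizer
`C_S(K)` is the product of the factors `S_i` with `i ∉ I`, and `N_S(K) = K × C_S(K)`. -/
theorem stmt7 {Δ : Type u} [Group Δ] [Finite Δ] (hΔ : IsNonabelianSimple Δ)
    (r : ℕ) [NeZero r] (φ : MulAut (Fin r → Δ)) (hord : orderOf φ = r)
    (hperm : ∀ i : Fin r,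
      Subgroup.map φ.toMonoidHom (factorSub (Δ := fun _ : Fin r => Δ) i) = factorSub (i + 1))
    (I : Finset (Fin r)) (hI : I.Nonempty)
    (K : Subgroup (Fin r → Δ)) (hK : K = dSubgroup φ I) :
    Subgroup.centralizer (K : Set (Fin r → Δ)) = suppSubgroup ((↑I : Set (Fin r))ᶜ) ∧
    Subgroup.normalizer (K : Set (Fin r → Δ)) = K ⊔ Subgroup.centralizer (K : Set (Fin r → Δ)) ∧
    Disjoint K (Subgroup.centralizer (K : Set (Fin r → Δ))) :=
  stmt7_general hΔ r φ hord hperm I hI K hK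

end Statements
end

section
/- If α is an automorphism of a finite elementary abelian q-group V (q a prime), then there is an element v ∈ V such that the stabilizer of v in ⟨α⟩ is trivial, i.e., C_{⟨α⟩}(v) = 1. -/
/-!
Regard `V` as a vector space over `𝔽_q` and `α` as a linear map. Since `𝔽_q[X]` is a principal
ideal domain, the finitely generated torsion `𝔽_q[X]`-module `V` (with `X` acting as `α`) has
an element `v` whose annihilator is the annihilator of the whole module. If `α ^ k` fixes `v`,
then `X ^ k - 1` kills `v`, hence kills `V`, that is, `α ^ k = 1`.
-/

open Polynomial in
theorem Module.End.exists_forall_aeval_apply_eq_zero {K W : Type*} [Field K] [AddCommGroup W]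
    [Module K W] [FiniteDimensional K W] (f : Module.End K W) :
    ∃ v : W, ∀ p : K[X], aeval f p v = 0 → aeval f p = 0 := by
  obtain ⟨v, hv⟩ := Module.exists_ker_toSpanSingleton_eq_annihilator K[X] (Module.AEval' f)
  have smul_eq (p : K[X]) (w : W) :
      p • Module.AEval'.of f w = Module.AEval'.of f (aeval f p w) :=
    (Module.AEval.of_aeval_smul ..).symm
  obtain ⟨v, rfl⟩ := (Module.AEval'.of f).surjective v
  refine ⟨v, fun p hp => ?_⟩
  have hann : p ∈ Module.annihilator K[X] (Module.AEval' f) := by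
    rw [← hv, LinearMap.mem_ker, LinearMap.toSpanSingleton_apply, smul_eq, hp, map_zero]
  ext w
  simpa [smul_eq] using Module.mem_annihilator.mp hann (Module.AEval'.of f w)

open Polynomial in
theorem Module.End.exists_forall_pow_apply_eq_self {K W : Type*} [Field K] [AddCommGroup W]
    [Module K W] [FiniteDimensional K W] (f : Module.End K W) :
    ∃ v : W, ∀ k : ℕ, (f ^ k) v = v → f ^ k = 1 := by
  obtain ⟨v, hv⟩ := f.exists_forall_aeval_apply_eq_zero
  refine ⟨v, fun k hk => ?_⟩
  have key := hv (X ^ k - 1)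
  simp only [map_sub, map_pow, aeval_X, map_one, LinearMap.sub_apply, Module.End.one_apply, hk,
    sub_self, sub_eq_zero] at key
  exact key trivial

def MulAut.toZModEnd (q : ℕ) (V : Type*) [CommGroup V] [Module (ZMod q) (Additive V)] :
    MulAut V →* Module.End (ZMod q) (Additive V) where
  toFun ψ := (MonoidHom.toAdditive ψ.toMonoidHom).toZModLinearMap q
  map_one' := rfl
  map_mul' _ _ := rfl

theorem MulAut.toZModEnd_apply (q : ℕ) {V : Type*} [CommGroup V] [Module (ZMod q) (Additive V)]
    (ψ : MulAut V) (x : Additive V) :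
    MulAut.toZModEnd q V ψ x = Additive.ofMul (ψ x.toMul) := rfl

theorem MulAut.toZModEnd_injective (q : ℕ) (V : Type*) [CommGroup V]
    [Module (ZMod q) (Additive V)] : Function.Injective (MulAut.toZModEnd q V) := by
  intro ψ χ h
  ext x
  exact congr($h (Additive.ofMul x))

theorem MulAut.exists_forall_mem_zpowers_apply_eq_self_imp_eq_one (q : ℕ) [Fact q.Prime]
    {V : Type*} [CommGroup V] [Finite V] [Module (ZMod q) (Additive V)] (α : MulAut V) :
    ∃ v : V, ∀ ψ ∈ Subgroup.zpowers α, ψ v = v → ψ = 1 := by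
  obtain ⟨v, hv⟩ := (MulAut.toZModEnd q V α).exists_forall_pow_apply_eq_self
  refine ⟨v.toMul, fun ψ hψ hfix => ?_⟩
  obtain ⟨k, rfl⟩ := (Submonoid.mem_powers_iff _ _).mp (mem_powers_iff_mem_zpowers.mpr hψ)
  apply MulAut.toZModEnd_injective q V
  rw [map_pow, map_one]
  refine hv k ?_
  rw [← map_pow, MulAut.toZModEnd_apply, hfix, ofMul_toMul]

theorem pow_eq_one_of_forall_ne_one_orderOf_eq {G : Type*} [Monoid G] {q : ℕ}
    (h : ∀ g : G, g ≠ 1 → orderOf g = q) (g : G) : g ^ q = 1 := by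
  by_cases hg : g = 1
  · rw [hg, one_pow]
  · rw [← h g hg, pow_orderOf_eq_one]

section Statements

universe u

open EngelPaper

/-- **Lemma 5.4.** An automorphism `α` of a finite elementary abelian `q`-group `V` has a
regular orbit: there is `v ∈ V` with `C_{⟨α⟩}(v) = 1`. -/
theorem stmt19 {V : Type u} [CommGroup V] [Finite V] (q : ℕ) (hq : q.Prime)
    (helem : ∀ v : V, v ≠ 1 → orderOf v = q) (α : MulAut V) :
    ∃ v : V, ∀ ψ ∈ Subgroup.zpowers α, ψ v = v → ψ = 1 := by
  have : Fact q.Prime := ⟨hq⟩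
  let _ : Module (ZMod q) (Additive V) := AddCommGroup.zmodModule fun x =>
    Additive.toMul.injective (pow_eq_one_of_forall_ne_one_orderOf_eq helem x.toMul)
  exact MulAut.exists_forall_mem_zpowers_apply_eq_self_imp_eq_one q α

end Statements
end
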